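/- If an up-down word w = w₁w₂⋯w_ℓ avoids the vincular pattern 2-31 (no indices j* < j with w_{j+1} < w_{j*} < w_j, where w_j, w_{j+1} adjacent), then the bottom elements of w are weakly increasing from left to right. -/
import Mathlib


/-- `w` is an up-down word: `w₀ < w₁ > w₂ < w₃ > ⋯` (0-indexed). -/
def IsUpDown {l k : ℕ} (w : Fin l → Fin k) : Prop :=
  ∀ j : ℕ, ∀ h : j + 1 < l,
    (j % 2 = 0 → w ⟨j, by omega⟩ < w ⟨j + 1, h⟩) ∧
    (j % 2 = 1 → w ⟨j + 1, h⟩ < w ⟨j, by omega⟩)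

/-- `w` avoids the vincular pattern 2-31: no `a < j` with
`w (j+1) < w a < w j` (the last two letters adjacent). -/
def AvoidsV2_31 {l k : ℕ} (w : Fin l → Fin k) : Prop :=
  ∀ a j : ℕ, ∀ haj : a < j, ∀ h : j + 1 < l,
    ¬ (w ⟨j + 1, h⟩ < w ⟨a, by omega⟩ ∧ w ⟨a, by omega⟩ < w ⟨j, by omega⟩)

set_option maxHeartbeats 2000000

/-- If an up-down word avoids the vincular pattern 2-31, then its bottom
elements are weakly increasing from left to right. -/
theorem stmt_12 (l k : ℕ) (w : Fin l → Fin k) (hud : IsUpDown w)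
    (hav : AvoidsV2_31 w) :
    ∀ m₁ m₂ : ℕ, ∀ h₁ : 2 * m₁ < l, ∀ h₂ : 2 * m₂ < l,
      m₁ ≤ m₂ → w ⟨2 * m₁, h₁⟩ ≤ w ⟨2 * m₂, h₂⟩ := by
  have step : ∀ n : ℕ, ∀ hn : 2 * (n + 1) < l,
      w ⟨2 * n, by omega⟩ ≤ w ⟨2 * (n + 1), hn⟩ := by
    intro n hn
    by_contra hlt
    push_neg at hlt
    have h1 := (hud (2 * n) (by omega)).1 (by omega)
    have h2 := (hud (2 * n + 1) (by omega)).2 (by omega)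
    have e1 : (⟨2 * n + 1 + 1, by omega⟩ : Fin l) = (⟨2 * (n + 1), hn⟩ : Fin l) :=
      Fin.ext (by show 2 * n + 1 + 1 = 2 * (n + 1); omega)
    rw [e1] at h2
    have hA : w ⟨2 * n + 1 + 1, by omega⟩ < w ⟨2 * n, by omega⟩ := by
      rw [e1]; exact hlt
    exact hav (2 * n) (2 * n + 1) (by omega) (by omega) ⟨hA, h1⟩
  intro m₁ m₂ h₁ h₂ hle
  induction m₂ with
  | zero =>
    have : m₁ = 0 := by omega
    subst this; exact le_refl _
  | succ n ih =>
    rcases Nat.lt_or_ge m₁ (n + 1) with h | h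
    · have hn : 2 * n < l := by omega
      exact le_trans (ih hn (by omega)) (step n h₂)
    · have : m₁ = n + 1 := by omega
      subst this; exact le_refl _
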